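/- Let n ≥ 2 be an integer and s ∈ (0,1). There exists a constant C = C(n,s) > 0 such that for every y, ξ ∈ ℝ^n_+ and z > 0, the full gradient of G_s with respect to the variables (y,z) satisfies |∇_{(y,z)} G_s((y,z),ξ)| ≤ C · (|y−ξ|² + z²)^{−(n−2s+1)/2} · min( 1, y_n ξ_n/(|y−ξ|² + z²) + ξ_n/(|y−ξ|² + z²)^{1/2} ). -/

import Mathlib

open MeasureTheory Real Set

/-- The last coordinate `y_n` of a point `y ∈ ℝ^n`. -/
noncomputable def lastCoord {n : ℕ} (y : EuclideanSpace ℝ (Fin n)) : ℝ :=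
  if h : 0 < n then y ⟨n - 1, Nat.sub_lt h one_pos⟩ else 0

/-- The kernel `G_s((y,z),ξ)`. -/
noncomputable def GKer (n : ℕ) (s : ℝ) (y : EuclideanSpace ℝ (Fin n)) (z : ℝ)
    (ξ : EuclideanSpace ℝ (Fin n)) : ℝ :=
  (‖y - ξ‖ ^ 2 + z ^ 2) ^ (-((n : ℝ) - 2 * s) / 2) *
    (1 - (1 + 4 * lastCoord y * lastCoord ξ / (‖y - ξ‖ ^ 2 + z ^ 2)) ^ ((2 * s - (n : ℝ)) / 2))

/-!
With `Q = |y - ξ|² + z²`, `d = 4 y_n ξ_n` and `α = (2s - n)/2`, the kernel is `Q^α - (Q + d)^α`,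
a difference of Riesz potentials centred at `ξ` and at its mirror image `(ξ', -ξ_n)`, since
`|y - (ξ', -ξ_n)|² = |y - ξ|² + d`. Its gradient is
`α (Q^(α-1) - (Q + d)^(α-1)) ∇Q - 4 α ξ_n (Q + d)^(α-1) e_n`, with `|∇Q| ≲ √Q`.
The mean value theorem bounds the bracket by `(1 - α) Q^(α-1) min(1, d/Q)`; and since
`|y_n - ξ_n| ≤ √Q` forces `ξ_n² ≤ Q + d`, also `ξ_n (Q + d)^(α-1) ≤ Q^(α-1) min(√Q, ξ_n)`.
-/

open Filter Topology ContinuousLinearMap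

theorem rpow_sub_rpow_le_of_nonpos {p a b : ℝ} (hp : p ≤ 0) (ha : 0 < a) (hab : a ≤ b) :
    a ^ p - b ^ p ≤ -p * a ^ (p - 1) * (b - a) := by
  have hcont : ContinuousOn (fun t : ℝ => t ^ p) (Ici a) := fun t ht =>
    (continuousAt_rpow_const _ _ (Or.inl (by linarith [mem_Ici.mp ht]))).continuousWithinAt
  have hdiff : DifferentiableOn ℝ (fun t : ℝ => t ^ p) (interior (Ici a)) := by
    intro t ht
    rw [interior_Ici, mem_Ioi] at ht
    exact (differentiableAt_rpow_const_of_ne p (by linarith)).differentiableWithinAt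
  have hderiv : ∀ t ∈ interior (Ici a), p * a ^ (p - 1) ≤ deriv (fun t : ℝ => t ^ p) t := by
    intro t ht
    rw [interior_Ici, mem_Ioi] at ht
    rw [Real.deriv_rpow_const]
    exact mul_le_mul_of_nonpos_left (rpow_le_rpow_of_nonpos ha ht.le (by linarith)) hp
  linarith [(convex_Ici a).mul_sub_le_image_sub_of_le_deriv hcont hdiff hderiv
    a (mem_Ici.mpr le_rfl) b hab hab]

theorem rpow_sub_rpow_add_le_mul_min {p a d : ℝ} (hp : p ≤ -1) (ha : 0 < a) (hd : 0 ≤ d) :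
    a ^ p - (a + d) ^ p ≤ -p * a ^ p * min 1 (d / a) := by
  rw [mul_min_of_nonneg _ _ (by nlinarith [rpow_pos_of_pos ha p]), mul_one]
  refine le_min ?_ ?_
  · nlinarith [rpow_pos_of_pos ha p, rpow_nonneg (by linarith : 0 ≤ a + d) p]
  · calc a ^ p - (a + d) ^ p ≤ -p * a ^ (p - 1) * (a + d - a) :=
          rpow_sub_rpow_le_of_nonpos (by linarith) ha (by linarith)
      _ = -p * a ^ p * (d / a) := by rw [rpow_sub_one ha.ne']; ring

theorem mul_rpow_add_le_rpow_mul_min {p Q u η : ℝ} (hp : p ≤ -1 / 2) (hQ : 0 < Q) (hu : 0 ≤ u)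
    (hη : 0 ≤ η) (huη : (u - η) ^ 2 ≤ Q) :
    η * (Q + 4 * η * u) ^ p ≤ Q ^ p * min (√Q) η := by
  have hR : 0 < Q + 4 * η * u := by positivity
  have hQ_le : Q ≤ Q + 4 * η * u := le_add_of_nonneg_right (by positivity)
  rw [mul_min_of_nonneg _ _ (rpow_nonneg hQ.le p)]
  refine le_min ?_ ?_
  · have hη_le : η ≤ √(Q + 4 * η * u) := le_sqrt_of_sq_le (by nlinarith [mul_nonneg hu hη])
    calc η * (Q + 4 * η * u) ^ p ≤ √(Q + 4 * η * u) * (Q + 4 * η * u) ^ p :=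
          mul_le_mul_of_nonneg_right hη_le (rpow_nonneg hR.le p)
      _ = (Q + 4 * η * u) ^ (p + 1 / 2) := by rw [rpow_add hR, sqrt_eq_rpow, mul_comm]
      _ ≤ Q ^ (p + 1 / 2) := rpow_le_rpow_of_nonpos hQ hQ_le (by linarith)
      _ = Q ^ p * √Q := by rw [rpow_add hQ, sqrt_eq_rpow]
  · rw [mul_comm]
    exact mul_le_mul_of_nonneg_right (rpow_le_rpow_of_nonpos hQ hQ_le (by linarith)) hη

theorem rpow_sub_rpow_add_mul_add_mul_rpow_add_le {α Q u η : ℝ} (hα : α ≤ 0) (hQ : 0 < Q)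
    (hu : 0 ≤ u) (hη : 0 ≤ η) (huη : (u - η) ^ 2 ≤ Q) :
    -α * (Q ^ (α - 1) - (Q + 4 * η * u) ^ (α - 1)) * (4 * √Q) +
        -4 * α * (η * (Q + 4 * η * u) ^ (α - 1)) ≤
      4 * -α * (5 - 4 * α) * Q ^ (α - 1 / 2) * min 1 (u * η / Q + η / √Q) := by
  set r := √Q
  set A₁ := Q ^ (α - 1)
  set M := min 1 (u * η / Q + η / r) with hM_def
  have hr : 0 < r := sqrt_pos.2 hQ
  have hA₁ : 0 < A₁ := rpow_pos_of_pos hQ _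
  have h₁ : A₁ - (Q + 4 * η * u) ^ (α - 1) ≤ 4 * (1 - α) * A₁ * M := by
    have hmin : min 1 (4 * η * u / Q) ≤ 4 * M := by
      rw [hM_def, mul_min_of_nonneg _ _ (by norm_num)]
      refine min_le_min (by norm_num) ?_
      have : 0 ≤ η / r := by positivity
      linarith [show 4 * η * u / Q = 4 * (u * η / Q) by ring]
    have h := rpow_sub_rpow_add_le_mul_min (p := α - 1) (by linarith) hQ
      (by positivity : 0 ≤ 4 * η * u)
    rw [neg_sub] at h
    nlinarith [mul_le_mul_of_nonneg_left hmin (by nlinarith : 0 ≤ (1 - α) * A₁)]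
  have h₂ : η * (Q + 4 * η * u) ^ (α - 1) ≤ A₁ * r * M := by
    have hmin : min r η ≤ r * M := by
      rw [hM_def, mul_min_of_nonneg _ _ hr.le, mul_one]
      refine min_le_min le_rfl ?_
      have : 0 ≤ u * η / Q := by positivity
      rw [mul_add, mul_div_cancel₀ _ hr.ne']
      nlinarith
    rw [mul_assoc A₁]
    exact (mul_rpow_add_le_rpow_mul_min (by linarith) hQ hu hη huη).trans
      (mul_le_mul_of_nonneg_left hmin hA₁.le)
  have hpow : Q ^ (α - 1 / 2) = A₁ * r := by
    rw [show α - 1 / 2 = (α - 1) + 1 / 2 by ring, rpow_add hQ, ← sqrt_eq_rpow]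
  rw [hpow]
  nlinarith [mul_le_mul_of_nonneg_left h₁ (by nlinarith : 0 ≤ -α * (4 * r)),
    mul_le_mul_of_nonneg_left h₂ (by linarith : 0 ≤ -4 * α)]

section
variable {E : Type*} [NormedAddCommGroup E] [InnerProductSpace ℝ E]

noncomputable def reflectionKernel (α : ℝ) (ℓ : E →L[ℝ] ℝ) (ξ : E) (p : E × ℝ) : ℝ :=
  (‖p.1 - ξ‖ ^ 2 + p.2 ^ 2) ^ α - (‖p.1 - ξ‖ ^ 2 + p.2 ^ 2 + 4 * ℓ ξ * ℓ p.1) ^ α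

noncomputable def sqDistDeriv (v : E) (z : ℝ) : E × ℝ →L[ℝ] ℝ :=
  2 • (innerSL ℝ v).comp (fst ℝ E ℝ) + (2 * z) • snd ℝ E ℝ

theorem hasFDerivAt_norm_sub_sq_add_sq (ξ y : E) (z : ℝ) :
    HasFDerivAt (fun p : E × ℝ => ‖p.1 - ξ‖ ^ 2 + p.2 ^ 2) (sqDistDeriv (y - ξ) z) (y, z) := by
  have hfst : HasFDerivAt (fun p : E × ℝ => p.1 - ξ) (fst ℝ E ℝ) (y, z) :=
    hasFDerivAt_fst.sub_const ξ
  have hsnd : HasFDerivAt (fun p : E × ℝ => p.2 ^ 2) ((2 * z) • snd ℝ E ℝ) (y, z) :=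
    (hasFDerivAt_snd.pow 2).congr_fderiv (by simp)
  exact hfst.norm_sq.add hsnd

theorem norm_sqDistDeriv_le (v : E) (z : ℝ) : ‖sqDistDeriv v z‖ ≤ 2 * (‖v‖ + |z|) := by
  set A := (innerSL ℝ v).comp (fst ℝ E ℝ)
  have hA : ‖A‖ ≤ ‖v‖ :=
    calc ‖A‖ ≤ ‖innerSL ℝ v‖ * ‖fst ℝ E ℝ‖ := opNorm_comp_le _ _
      _ ≤ ‖v‖ * 1 := by
        rw [innerSL_apply_norm]; gcongr; exact ContinuousLinearMap.norm_fst_le ℝ E ℝ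
      _ = ‖v‖ := mul_one _
  have hz : ‖(2 * z) • snd ℝ E ℝ‖ ≤ 2 * |z| := by
    refine (opNorm_smul_le _ _).trans ?_
    rw [Real.norm_eq_abs, abs_mul, abs_two]
    exact mul_le_of_le_one_right (by positivity) (ContinuousLinearMap.norm_snd_le ℝ E ℝ)
  rw [sqDistDeriv, two_smul]
  linarith [norm_add_le (A + A) ((2 * z) • snd ℝ E ℝ), norm_add_le A A]

theorem hasFDerivAt_reflectionKernel (α : ℝ) (ℓ : E →L[ℝ] ℝ) {ξ y : E} {z : ℝ}
    (hQ : 0 < ‖y - ξ‖ ^ 2 + z ^ 2) (hQd : 0 < ‖y - ξ‖ ^ 2 + z ^ 2 + 4 * ℓ ξ * ℓ y) :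
    HasFDerivAt (reflectionKernel α ℓ ξ)
      ((α * ((‖y - ξ‖ ^ 2 + z ^ 2) ^ (α - 1) -
            (‖y - ξ‖ ^ 2 + z ^ 2 + 4 * ℓ ξ * ℓ y) ^ (α - 1))) • sqDistDeriv (y - ξ) z -
        (4 * α * ℓ ξ * (‖y - ξ‖ ^ 2 + z ^ 2 + 4 * ℓ ξ * ℓ y) ^ (α - 1)) • ℓ.comp (fst ℝ E ℝ))
      (y, z) := by
  have hQ' := hasFDerivAt_norm_sub_sq_add_sq ξ y z
  have hℓ : HasFDerivAt (fun p : E × ℝ => 4 * ℓ ξ * ℓ p.1) ((4 * ℓ ξ) • ℓ.comp (fst ℝ E ℝ))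
      (y, z) :=
    (ℓ.comp (fst ℝ E ℝ)).hasFDerivAt.const_mul (4 * ℓ ξ)
  refine ((hQ'.rpow_const (Or.inl hQ.ne')).sub
    ((hQ'.add hℓ).rpow_const (Or.inl hQd.ne'))).congr_fderiv ?_
  ext <;> simp [sqDistDeriv] <;> ring

theorem norm_fderiv_reflectionKernel_le {α : ℝ} (hα : α ≤ 0) {ℓ : E →L[ℝ] ℝ} (hℓ : ‖ℓ‖ ≤ 1)
    {ξ y : E} (hy : 0 ≤ ℓ y) (hξ : 0 ≤ ℓ ξ) {z : ℝ} (hz : z ≠ 0) :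
    ‖fderiv ℝ (reflectionKernel α ℓ ξ) (y, z)‖ ≤
      4 * (-α) * (5 - 4 * α) * (‖y - ξ‖ ^ 2 + z ^ 2) ^ (α - 1 / 2) *
        min 1 (ℓ y * ℓ ξ / (‖y - ξ‖ ^ 2 + z ^ 2) + ℓ ξ / √(‖y - ξ‖ ^ 2 + z ^ 2)) := by
  have hQ : 0 < ‖y - ξ‖ ^ 2 + z ^ 2 := by positivity
  have hQd : 0 < ‖y - ξ‖ ^ 2 + z ^ 2 + 4 * ℓ ξ * ℓ y := by positivity
  rw [(hasFDerivAt_reflectionKernel α ℓ hQ hQd).fderiv]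
  set Q := ‖y - ξ‖ ^ 2 + z ^ 2
  set A₁ := Q ^ (α - 1)
  set A₂ := (Q + 4 * ℓ ξ * ℓ y) ^ (α - 1)
  have hA₂ : 0 ≤ A₂ := rpow_nonneg hQd.le _
  have hA₂_le : A₂ ≤ A₁ :=
    rpow_le_rpow_of_nonpos hQ (le_add_of_nonneg_right (by positivity)) (by linarith)
  have hQ'_norm : ‖sqDistDeriv (y - ξ) z‖ ≤ 4 * √Q := by
    have h₁ : |‖y - ξ‖| ≤ √Q := abs_le_sqrt (by linarith [sq_nonneg z])
    have h₂ : |z| ≤ √Q := abs_le_sqrt (by linarith [sq_nonneg ‖y - ξ‖])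
    rw [abs_norm] at h₁
    linarith [norm_sqDistDeriv_le (y - ξ) z]
  have hℓ'_norm : ‖ℓ.comp (fst ℝ E ℝ)‖ ≤ 1 :=
    (opNorm_comp_le _ _).trans (mul_le_one₀ hℓ (norm_nonneg _) (norm_fst_le ℝ E ℝ))
  have hcoord : (ℓ y - ℓ ξ) ^ 2 ≤ Q := by
    have h : |ℓ (y - ξ)| ≤ ‖y - ξ‖ := by
      simpa using (ℓ.le_opNorm (y - ξ)).trans (mul_le_of_le_one_left (norm_nonneg _) hℓ)
    rw [map_sub] at h
    nlinarith [sq_abs (ℓ y - ℓ ξ), abs_nonneg (ℓ y - ℓ ξ), sq_nonneg z]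
  have ha : ‖α * (A₁ - A₂)‖ = -α * (A₁ - A₂) := by
    rw [Real.norm_eq_abs, abs_of_nonpos (mul_nonpos_of_nonpos_of_nonneg hα (by linarith))]
    ring
  have hb : ‖4 * α * ℓ ξ * A₂‖ = -4 * α * (ℓ ξ * A₂) := by
    rw [Real.norm_eq_abs, abs_of_nonpos (by nlinarith [mul_nonneg hξ hA₂])]
    ring
  have hs₁ := opNorm_smul_le (α * (A₁ - A₂)) (sqDistDeriv (y - ξ) z)
  have hs₂ := opNorm_smul_le (4 * α * ℓ ξ * A₂) (ℓ.comp (fst ℝ E ℝ))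
  rw [ha] at hs₁
  rw [hb] at hs₂
  have e₁ := mul_le_mul_of_nonneg_left hQ'_norm
    (mul_nonneg (by linarith) (by linarith) : 0 ≤ -α * (A₁ - A₂))
  have e₂ := mul_le_mul_of_nonneg_left hℓ'_norm
    (mul_nonneg (by linarith) (mul_nonneg hξ hA₂) : 0 ≤ -4 * α * (ℓ ξ * A₂))
  linarith [norm_sub_le ((α * (A₁ - A₂)) • sqDistDeriv (y - ξ) z)
    ((4 * α * ℓ ξ * A₂) • ℓ.comp (fst ℝ E ℝ)),
    rpow_sub_rpow_add_mul_add_mul_rpow_add_le hα hQ hy hξ hcoord]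

end

theorem exists_clm_apply_eq_lastCoord {n : ℕ} (hn : 0 < n) :
    ∃ ℓ : EuclideanSpace ℝ (Fin n) →L[ℝ] ℝ, ‖ℓ‖ ≤ 1 ∧ ∀ v, ℓ v = lastCoord v := by
  refine ⟨EuclideanSpace.proj ⟨n - 1, Nat.sub_lt hn one_pos⟩, ?_, fun v => ?_⟩
  · exact opNorm_le_bound _ zero_le_one fun v => by
      simpa using PiLp.norm_apply_le v ⟨n - 1, Nat.sub_lt hn one_pos⟩
  · simp [lastCoord, hn]

theorem GKer_eq_reflectionKernel {n : ℕ} (s : ℝ) {ℓ : EuclideanSpace ℝ (Fin n) →L[ℝ] ℝ}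
    (hℓ : ∀ v, ℓ v = lastCoord v) {y ξ : EuclideanSpace ℝ (Fin n)} {z : ℝ}
    (hQ : 0 < ‖y - ξ‖ ^ 2 + z ^ 2) (hyξ : 0 ≤ lastCoord y * lastCoord ξ) :
    GKer n s y z ξ = reflectionKernel ((2 * s - n) / 2) ℓ ξ (y, z) := by
  have h : 0 ≤ 1 + 4 * lastCoord y * lastCoord ξ / (‖y - ξ‖ ^ 2 + z ^ 2) := by
    have := div_nonneg (mul_nonneg zero_le_four hyξ) hQ.le
    rw [mul_assoc]
    linarith
  rw [GKer, reflectionKernel, hℓ, hℓ, show -((n : ℝ) - 2 * s) / 2 = (2 * s - n) / 2 by ring,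
    mul_sub, mul_one, ← mul_rpow hQ.le h, mul_add, mul_one, mul_div_cancel₀ _ hQ.ne']
  ring_nf

theorem GKer_eventuallyEq_reflectionKernel {n : ℕ} (s : ℝ)
    {ℓ : EuclideanSpace ℝ (Fin n) →L[ℝ] ℝ} (hℓ : ∀ v, ℓ v = lastCoord v)
    {y ξ : EuclideanSpace ℝ (Fin n)} (hy : 0 < lastCoord y) (hξ : 0 ≤ lastCoord ξ) {z : ℝ}
    (hz : z ≠ 0) :
    (fun p : EuclideanSpace ℝ (Fin n) × ℝ => GKer n s p.1 p.2 ξ) =ᶠ[𝓝 (y, z)]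
      reflectionKernel ((2 * s - n) / 2) ℓ ξ := by
  have hQ : ∀ᶠ p : EuclideanSpace ℝ (Fin n) × ℝ in 𝓝 (y, z), 0 < ‖p.1 - ξ‖ ^ 2 + p.2 ^ 2 :=
    continuousAt_const.eventually_lt (by fun_prop) (by positivity)
  have hℓy : ∀ᶠ p : EuclideanSpace ℝ (Fin n) × ℝ in 𝓝 (y, z), 0 < ℓ p.1 :=
    continuousAt_const.eventually_lt (by fun_prop) (by rwa [hℓ])
  filter_upwards [hQ, hℓy] with p hp hℓp
  rw [hℓ] at hℓp
  exact GKer_eq_reflectionKernel s hℓ hp (mul_nonneg hℓp.le hξ)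

theorem stmt4_general (n : ℕ) (hn : 2 ≤ n) (s : ℝ) (hs1 : s < 1) :
    ∃ C > (0 : ℝ), ∀ y ξ : EuclideanSpace ℝ (Fin n),
      0 < lastCoord y → 0 < lastCoord ξ → ∀ z : ℝ, 0 < z →
        ‖fderiv ℝ (fun p : EuclideanSpace ℝ (Fin n) × ℝ => GKer n s p.1 p.2 ξ) (y, z)‖ ≤
          C * (‖y - ξ‖ ^ 2 + z ^ 2) ^ (-((n : ℝ) - 2 * s + 1) / 2) *
            min 1 (lastCoord y * lastCoord ξ / (‖y - ξ‖ ^ 2 + z ^ 2) +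
              lastCoord ξ / (‖y - ξ‖ ^ 2 + z ^ 2) ^ ((1 : ℝ) / 2)) := by
  obtain ⟨ℓ, hℓ, hℓ_eq⟩ := exists_clm_apply_eq_lastCoord (n := n) (by omega)
  have hα : (2 * s - n) / 2 < 0 := by
    have : (2 : ℝ) ≤ n := by exact_mod_cast hn
    linarith
  refine ⟨4 * -((2 * s - n) / 2) * (5 - 4 * ((2 * s - n) / 2)), by nlinarith,
    fun y ξ hy hξ z hz => ?_⟩
  rw [(GKer_eventuallyEq_reflectionKernel s hℓ_eq hy hξ.le hz.ne').fderiv_eq,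
    show -((n : ℝ) - 2 * s + 1) / 2 = (2 * s - n) / 2 - 1 / 2 by ring, ← sqrt_eq_rpow,
    ← hℓ_eq, ← hℓ_eq]
  rw [← hℓ_eq] at hy hξ
  exact norm_fderiv_reflectionKernel_le hα.le hℓ hy.le hξ.le hz.ne'

theorem stmt4 (n : ℕ) (hn : 2 ≤ n) (s : ℝ) (hs0 : 0 < s) (hs1 : s < 1) :
    ∃ C > (0 : ℝ), ∀ y ξ : EuclideanSpace ℝ (Fin n),
      0 < lastCoord y → 0 < lastCoord ξ → ∀ z : ℝ, 0 < z →
        ‖fderiv ℝ (fun p : EuclideanSpace ℝ (Fin n) × ℝ => GKer n s p.1 p.2 ξ) (y, z)‖ ≤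
          C * (‖y - ξ‖ ^ 2 + z ^ 2) ^ (-((n : ℝ) - 2 * s + 1) / 2) *
            min 1 (lastCoord y * lastCoord ξ / (‖y - ξ‖ ^ 2 + z ^ 2) +
              lastCoord ξ / (‖y - ξ‖ ^ 2 + z ^ 2) ^ ((1 : ℝ) / 2)) :=
  stmt4_general n hn s hs1
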